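/- Let κ > 0 and M ≥ 1, and suppose Ω, r, φ satisfy, on Q, equations (N1) and (N3), the axis normalization, and 1/M ≤ Ω ≤ M. Let ε > 0 and assume the flux smallness: for every (u,ū) ∈ Q, ∫_u^{ū} ( r (∂_uφ)² )(u′,ū) du′ ≤ ε, ∫_u^{ū} ( g(φ)²/r )(u′,ū) du′ ≤ ε and ∫_u^{ū} ( g(φ)²/r )(u,ū′) dū′ ≤ ε. Then there exist ε₀ > 0 and C > 0, depending only on κ and M, such that if ε ≤ ε₀ then on all of Q: |∂_ū r − 1/2| ≤ Cε, |∂_u r + 1/2| ≤ Cε, |r − ϱ| ≤ C ε ϱ, and |Ω − 1| ≤ Cε. -/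

import Mathlib

/-!
Equation (N3) makes `∂_u ∂_ū r = κ Ω² g(φ)² / (4 r)` nonnegative and bounded by `κ M² / 4` times
the integrand of the angular flux, so integrating it along a null segment that ends on the axis,
where `∂_ū r = 1/2` and `∂_u r = -1/2`, moves `∂_ū r` and `∂_u r` by at most `κ M² ε / 4`.
Likewise (N1) makes `Ω⁻² ∂_u r` monotone in `u`, varying by at most `κ M²` times the radial flux,
so it also stays within `κ M² ε` of its axis value `-1/2`. Integrating `∂_ū r` from the axis
gives `r ≈ ϱ`, and comparing `∂_u r ≈ -1/2` with `Ω⁻² ∂_u r ≈ -1/2` forces `Ω² ≈ 1`.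
-/

open Real

/-- Partial derivative in the null variable `u`. -/
noncomputable def pdu (f : ℝ → ℝ → ℝ) (u v : ℝ) : ℝ := deriv (fun u' => f u' v) u

/-- Partial derivative in the null variable `ū`. -/
noncomputable def pdub (f : ℝ → ℝ → ℝ) (u v : ℝ) : ℝ := deriv (fun v' => f u v') v

/-- The rescaled double-null domain `Q = {(u,ū) : −2 ≤ u ≤ ū ≤ 0}`. -/
def Qset : Set (ℝ × ℝ) := {p | -2 ≤ p.1 ∧ p.1 ≤ p.2 ∧ p.2 ≤ 0}

/-- `ϱ = (ū − u)/2`. -/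
noncomputable def vrho (p : ℝ × ℝ) : ℝ := (p.2 - p.1) / 2

/-- The axis normalization `r = 0`, `∂_ū r = 1/2`, `∂_u r = −1/2`, `Ω = 1`, `φ = 0` on
the axis `Γ = {u = ū}` (inside `Q`). -/
def AxisNormalized (Ω r φ : ℝ → ℝ → ℝ) : Prop :=
  ∀ u ∈ Set.Icc (-2 : ℝ) 0,
    r u u = 0 ∧ pdub r u u = 1 / 2 ∧ pdu r u u = -(1 / 2) ∧ Ω u u = 1 ∧ φ u u = 0

/-- `Ω`, `r`, `φ` are `Cⁿ` on a neighborhood of `Q`. -/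
def SmoothNearQ (n : ℕ) (Ω r φ : ℝ → ℝ → ℝ) : Prop :=
  ∃ V : Set (ℝ × ℝ), IsOpen V ∧ Qset ⊆ V ∧
    ContDiffOn ℝ n (fun p : ℝ × ℝ => Ω p.1 p.2) V ∧
    ContDiffOn ℝ n (fun p : ℝ × ℝ => r p.1 p.2) V ∧
    ContDiffOn ℝ n (fun p : ℝ × ℝ => φ p.1 p.2) V

/-- Equation (N1): `∂_u(Ω^{−2} ∂_u r) = −Ω^{−2} κ r (∂_u φ)²`. -/
def EqN1 (κ : ℝ) (Ω r φ : ℝ → ℝ → ℝ) (u v : ℝ) : Prop :=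
  pdu (fun u' v' => ((Ω u' v') ^ 2)⁻¹ * pdu r u' v') u v
    = -(((Ω u v) ^ 2)⁻¹ * κ * r u v * (pdu φ u v) ^ 2)

/-- Equation (N2): `∂_ū(Ω^{−2} ∂_ū r) = −Ω^{−2} κ r (∂_ū φ)²`. -/
def EqN2 (κ : ℝ) (Ω r φ : ℝ → ℝ → ℝ) (u v : ℝ) : Prop :=
  pdub (fun u' v' => ((Ω u' v') ^ 2)⁻¹ * pdub r u' v') u v
    = -(((Ω u v) ^ 2)⁻¹ * κ * r u v * (pdub φ u v) ^ 2)

/-- Equation (N3): `∂_u ∂_ū r = κ Ω² g(φ)² / (4r)`. -/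
def EqN3 (κ : ℝ) (g : ℝ → ℝ) (Ω r φ : ℝ → ℝ → ℝ) (u v : ℝ) : Prop :=
  pdu (pdub r) u v = κ * (Ω u v) ^ 2 * (g (φ u v)) ^ 2 / (4 * r u v)

/-- Equation (N4): `∂_u(r ∂_ū φ) + ∂_ū(r ∂_u φ) = −Ω² g(φ)g′(φ)/(2r)`. -/
def EqN4 (g : ℝ → ℝ) (Ω r φ : ℝ → ℝ → ℝ) (u v : ℝ) : Prop :=
  pdu (fun u' v' => r u' v' * pdub φ u' v') u v
      + pdub (fun u' v' => r u' v' * pdu φ u' v') u v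
    = -((Ω u v) ^ 2 * g (φ u v) * deriv g (φ u v) / (2 * r u v))

/-- Equation (N5): `∂_u ∂_ū (log Ω) = −(κ/2) ∂_u φ ∂_ū φ − (κΩ²/8) g(φ)²/r²`. -/
def EqN5 (κ : ℝ) (g : ℝ → ℝ) (Ω r φ : ℝ → ℝ → ℝ) (u v : ℝ) : Prop :=
  pdu (pdub (fun u' v' => Real.log (Ω u' v'))) u v
    = -((κ / 2) * pdu φ u v * pdub φ u v)
      - (κ * (Ω u v) ^ 2 / 8) * (g (φ u v)) ^ 2 / (r u v) ^ 2

open Set Function Topology MeasureTheory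

section PartialDerivatives

variable {E : Type*} [NormedAddCommGroup E] [NormedSpace ℝ E]

theorem hasDerivAt_slice_fst {F : ℝ × ℝ → E} {u v : ℝ} (hF : DifferentiableAt ℝ F (u, v)) :
    HasDerivAt (fun s => F (s, v)) (fderiv ℝ F (u, v) (1, 0)) u :=
  hF.hasFDerivAt.comp_hasDerivAt u ((hasDerivAt_id u).prodMk (hasDerivAt_const u v))

theorem hasDerivAt_slice_snd {F : ℝ × ℝ → E} {u v : ℝ} (hF : DifferentiableAt ℝ F (u, v)) :
    HasDerivAt (fun t => F (u, t)) (fderiv ℝ F (u, v) (0, 1)) v :=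
  hF.hasFDerivAt.comp_hasDerivAt v ((hasDerivAt_const v u).prodMk (hasDerivAt_id v))

variable {f : ℝ → ℝ → ℝ} {u v : ℝ} {V : Set (ℝ × ℝ)}

theorem pdu_eq_fderiv (hf : DifferentiableAt ℝ (uncurry f) (u, v)) :
    pdu f u v = fderiv ℝ (uncurry f) (u, v) (1, 0) :=
  (hasDerivAt_slice_fst hf).deriv

theorem pdub_eq_fderiv (hf : DifferentiableAt ℝ (uncurry f) (u, v)) :
    pdub f u v = fderiv ℝ (uncurry f) (u, v) (0, 1) :=
  (hasDerivAt_slice_snd hf).deriv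

theorem hasDerivAt_pdu (hf : DifferentiableAt ℝ (uncurry f) (u, v)) :
    HasDerivAt (fun s => f s v) (pdu f u v) u :=
  (hasDerivAt_slice_fst hf).differentiableAt.hasDerivAt

theorem hasDerivAt_pdub (hf : DifferentiableAt ℝ (uncurry f) (u, v)) :
    HasDerivAt (fun t => f u t) (pdub f u v) v :=
  (hasDerivAt_slice_snd hf).differentiableAt.hasDerivAt

theorem contDiffOn_pdu {n : WithTop ℕ∞} (hV : IsOpen V)
    (hf : ContDiffOn ℝ (n + 1) (uncurry f) V) :
    ContDiffOn ℝ n (uncurry (pdu f)) V :=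
  ((hf.fderiv_of_isOpen hV le_rfl).clm_apply contDiffOn_const).congr fun _ hq =>
    pdu_eq_fderiv ((hf.differentiableOn (by simp)).differentiableAt (hV.mem_nhds hq))

theorem contDiffOn_pdub {n : WithTop ℕ∞} (hV : IsOpen V)
    (hf : ContDiffOn ℝ (n + 1) (uncurry f) V) :
    ContDiffOn ℝ n (uncurry (pdub f)) V :=
  ((hf.fderiv_of_isOpen hV le_rfl).clm_apply contDiffOn_const).congr fun _ hq =>
    pdub_eq_fderiv ((hf.differentiableOn (by simp)).differentiableAt (hV.mem_nhds hq))

theorem hasDerivAt_pdu_pdub (hf : ContDiffAt ℝ 2 (uncurry f) (u, v)) :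
    HasDerivAt (fun s => pdub f s v)
      (fderiv ℝ (fderiv ℝ (uncurry f)) (u, v) (1, 0) (0, 1)) u := by
  have hf' : DifferentiableAt ℝ (fderiv ℝ (uncurry f)) (u, v) :=
    (hf.fderiv_right (m := 1) le_rfl).differentiableAt one_ne_zero
  refine ((hasDerivAt_slice_fst hf').clm_apply (hasDerivAt_const u (0, 1))).congr_of_eventuallyEq
    ?_ |>.congr_deriv (by simp)
  have hnear : ∀ᶠ s in 𝓝 u, DifferentiableAt ℝ (uncurry f) (s, v) :=
    ((continuous_id.prodMk continuous_const).tendsto u).eventually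
      ((hf.eventually (by simp)).mono fun _ h => h.differentiableAt (by simp))
  filter_upwards [hnear] with s hs
  exact pdub_eq_fderiv hs

theorem hasDerivAt_pdub_pdu (hf : ContDiffAt ℝ 2 (uncurry f) (u, v)) :
    HasDerivAt (fun t => pdu f u t)
      (fderiv ℝ (fderiv ℝ (uncurry f)) (u, v) (0, 1) (1, 0)) v := by
  have hf' : DifferentiableAt ℝ (fderiv ℝ (uncurry f)) (u, v) :=
    (hf.fderiv_right (m := 1) le_rfl).differentiableAt one_ne_zero
  refine ((hasDerivAt_slice_snd hf').clm_apply (hasDerivAt_const v (1, 0))).congr_of_eventuallyEq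
    ?_ |>.congr_deriv (by simp)
  have hnear : ∀ᶠ t in 𝓝 v, DifferentiableAt ℝ (uncurry f) (u, t) :=
    ((continuous_const.prodMk continuous_id).tendsto v).eventually
      ((hf.eventually (by simp)).mono fun _ h => h.differentiableAt (by simp))
  filter_upwards [hnear] with t ht
  exact pdu_eq_fderiv ht

theorem pdu_pdub_comm (hf : ContDiffAt ℝ 2 (uncurry f) (u, v)) :
    pdu (pdub f) u v = pdub (pdu f) u v :=
  ((hasDerivAt_pdu_pdub hf).deriv.trans (hf.isSymmSndFDerivAt (by simp) _ _)).trans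
    (hasDerivAt_pdub_pdu hf).deriv.symm

end PartialDerivatives

/-- `G` is only controlled on the open interval, since the flux integrands `g(φ)² / r` are
singular (or junk) where `r = 0`; it is integrable because it agrees there with `d / c`. -/
theorem abs_sub_le_of_hasDerivAt_eq_mul {h d c G : ℝ → ℝ} {a b K ε : ℝ} (hab : a ≤ b)
    (hh : ∀ x ∈ Icc a b, HasDerivAt h (d x) x) (hd : ContinuousOn d (Icc a b))
    (hc : ContinuousOn c (Icc a b)) (hc0 : ∀ x ∈ Icc a b, 0 < c x)
    (hcK : ∀ x ∈ Icc a b, c x ≤ K) (hG : ∀ x ∈ Ioo a b, 0 ≤ G x)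
    (hdG : ∀ x ∈ Ioo a b, d x = c x * G x) (hGε : ∫ x in a..b, G x ≤ ε) :
    |h b - h a| ≤ K * ε := by
  have hG_eq : ∀ x ∈ Ioo a b, d x / c x = G x := fun x hx => by
    rw [hdG x hx, mul_div_cancel_left₀ _ (hc0 x (Ioo_subset_Icc_self hx)).ne']
  have hd_int : IntervalIntegrable d volume a b := hd.intervalIntegrable_of_Icc hab
  have hdc_int : IntervalIntegrable (fun x => d x / c x) volume a b :=
    (hd.div hc fun x hx => (hc0 x hx).ne').intervalIntegrable_of_Icc hab
  have hFTC : ∫ x in a..b, d x = h b - h a :=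
    intervalIntegral.integral_eq_sub_of_hasDerivAt (by rwa [uIcc_of_le hab]) hd_int
  have hK : 0 ≤ K := ((hc0 a ⟨le_rfl, hab⟩).trans_le (hcK a ⟨le_rfl, hab⟩)).le
  have h_nonneg : 0 ≤ ∫ x in a..b, d x := by
    simpa using intervalIntegral.integral_mono_on_of_le_Ioo (f := fun _ => 0) hab
      intervalIntegrable_const hd_int fun x hx =>
        (hdG x hx).symm ▸ mul_nonneg (hc0 x (Ioo_subset_Icc_self hx)).le (hG x hx)
  have h_le : ∫ x in a..b, d x ≤ ∫ x in a..b, K * (d x / c x) :=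
    intervalIntegral.integral_mono_on_of_le_Ioo hab hd_int (hdc_int.const_mul K) fun x hx => by
      rw [hG_eq x hx, hdG x hx]
      exact mul_le_mul_of_nonneg_right (hcK x (Ioo_subset_Icc_self hx)) (hG x hx)
  have h_flux : ∫ x in a..b, d x / c x = ∫ x in a..b, G x :=
    intervalIntegral.integral_congr_uIoo fun x hx => hG_eq x (by rwa [uIoo_of_le hab] at hx)
  rw [← hFTC, abs_of_nonneg h_nonneg]
  calc ∫ x in a..b, d x ≤ K * ∫ x in a..b, G x := by
        rwa [intervalIntegral.integral_const_mul, h_flux] at h_le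
    _ ≤ K * ε := mul_le_mul_of_nonneg_left hGε hK

theorem abs_sub_one_le_of_abs_add_half_le {O A δ : ℝ} (hO : 0 < O) (hA : |A + 1 / 2| ≤ δ)
    (hW : |(O ^ 2)⁻¹ * A + 1 / 2| ≤ δ) (hδ : δ ≤ 1 / 4) : |O - 1| ≤ 8 * δ := by
  set W := (O ^ 2)⁻¹ * A
  have hAW : A = O ^ 2 * W := by simp only [W]; field_simp
  have hW4 : 1 / 4 ≤ |W| := by
    rw [abs_le] at hW
    rw [abs_of_neg (by linarith)]
    linarith
  have hAW_sub : |O ^ 2 - 1| * |W| ≤ 2 * δ := by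
    rw [← abs_mul, sub_mul, one_mul, ← hAW,
      show A - W = (A + 1 / 2) - (W + 1 / 2) by ring]
    linarith [abs_sub (A + 1 / 2) (W + 1 / 2)]
  have hsq : |O ^ 2 - 1| ≤ 8 * δ := by nlinarith [abs_nonneg (O ^ 2 - 1)]
  calc |O - 1| ≤ |O - 1| * (O + 1) := le_mul_of_one_le_right (abs_nonneg _) (by linarith)
    _ = |O ^ 2 - 1| := by
      rw [show O ^ 2 - 1 = (O - 1) * (O + 1) by ring, abs_mul, abs_of_pos (by linarith : 0 < O + 1)]
    _ ≤ 8 * δ := hsq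

namespace Qset

variable {a b s : ℝ}

theorem fst_mem (hp : (a, b) ∈ Qset) (hs : s ∈ Icc a b) : (s, b) ∈ Qset :=
  ⟨hp.1.trans hs.1, hs.2, hp.2.2⟩

theorem snd_mem (hp : (a, b) ∈ Qset) (hs : s ∈ Icc a b) : (a, s) ∈ Qset :=
  ⟨hp.1, hs.1, hs.2.trans hp.2.2⟩

theorem fst_mem_axis (hp : (a, b) ∈ Qset) : a ∈ Icc (-2 : ℝ) 0 :=
  ⟨hp.1, hp.2.1.trans hp.2.2⟩

theorem snd_mem_axis (hp : (a, b) ∈ Qset) : b ∈ Icc (-2 : ℝ) 0 :=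
  ⟨hp.1.trans hp.2.1, hp.2.2⟩

variable {F : ℝ → ℝ → ℝ} {V : Set (ℝ × ℝ)}

theorem continuousOn_slice_fst (hQV : Qset ⊆ V) (hF : ContinuousOn (uncurry F) V)
    (hp : (a, b) ∈ Qset) : ContinuousOn (fun s => F s b) (Icc a b) :=
  hF.comp (continuous_id.prodMk continuous_const).continuousOn fun _ hs => hQV (fst_mem hp hs)

theorem continuousOn_slice_snd (hQV : Qset ⊆ V) (hF : ContinuousOn (uncurry F) V)
    (hp : (a, b) ∈ Qset) : ContinuousOn (fun t => F a t) (Icc a b) :=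
  hF.comp (continuous_const.prodMk continuous_id).continuousOn fun _ ht => hQV (snd_mem hp ht)

end Qset

section SmallFlux

variable {κ M ε : ℝ} {g : ℝ → ℝ} {Ω r φ : ℝ → ℝ → ℝ} {V : Set (ℝ × ℝ)} {a b : ℝ}

theorem abs_pdub_sub_half_le (hκ : 0 < κ) (hV : IsOpen V) (hQV : Qset ⊆ V)
    (hΩ : ContinuousOn (uncurry Ω) V) (hr : ContDiffOn ℝ 2 (uncurry r) V)
    (hrpos : ∀ p ∈ Qset, p.1 < p.2 → 0 < r p.1 p.2)
    (hN3 : ∀ p ∈ Qset, p.1 < p.2 → EqN3 κ g Ω r φ p.1 p.2)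
    (hΩpos : ∀ p ∈ Qset, 0 < Ω p.1 p.2) (hΩM : ∀ p ∈ Qset, Ω p.1 p.2 ≤ M)
    (hax : ∀ u ∈ Icc (-2 : ℝ) 0, pdub r u u = 1 / 2)
    (hflux : ∀ p ∈ Qset, (∫ u' in p.1..p.2, (g (φ u' p.2)) ^ 2 / r u' p.2) ≤ ε)
    (hp : (a, b) ∈ Qset) :
    |pdub r a b - 1 / 2| ≤ κ * M ^ 2 / 4 * ε := by
  have hr' : ContDiffOn ℝ 1 (uncurry (pdub r)) V := contDiffOn_pdub hV hr
  have key := abs_sub_le_of_hasDerivAt_eq_mul (h := fun s => pdub r s b)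
    (K := κ * M ^ 2 / 4) (c := fun s => κ * Ω s b ^ 2 / 4) (G := fun s => g (φ s b) ^ 2 / r s b)
    (show a ≤ b from hp.2.1)
    (fun s hs => hasDerivAt_pdu <|
      (hr'.differentiableOn one_ne_zero).differentiableAt (hV.mem_nhds (hQV (Qset.fst_mem hp hs))))
    (Qset.continuousOn_slice_fst hQV
      (contDiffOn_pdu (n := 0) hV (by simpa using hr')).continuousOn hp)
    ((continuousOn_const.mul ((Qset.continuousOn_slice_fst hQV hΩ hp).pow 2)).div_const 4)
    (fun s hs => by have := hΩpos _ (Qset.fst_mem hp hs); positivity)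
    (fun s hs => by
      have hq := Qset.fst_mem hp hs
      gcongr
      exacts [(hΩpos _ hq).le, hΩM _ hq])
    (fun s hs => by have := hrpos _ (Qset.fst_mem hp (Ioo_subset_Icc_self hs)) hs.2; positivity)
    (fun s hs => by
      rw [hN3 _ (Qset.fst_mem hp (Ioo_subset_Icc_self hs)) hs.2]; ring)
    (hflux _ hp)
  rwa [hax b (Qset.snd_mem_axis hp), abs_sub_comm] at key

theorem abs_pdu_add_half_le (hκ : 0 < κ) (hV : IsOpen V) (hQV : Qset ⊆ V)
    (hΩ : ContinuousOn (uncurry Ω) V) (hr : ContDiffOn ℝ 2 (uncurry r) V)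
    (hrpos : ∀ p ∈ Qset, p.1 < p.2 → 0 < r p.1 p.2)
    (hN3 : ∀ p ∈ Qset, p.1 < p.2 → EqN3 κ g Ω r φ p.1 p.2)
    (hΩpos : ∀ p ∈ Qset, 0 < Ω p.1 p.2) (hΩM : ∀ p ∈ Qset, Ω p.1 p.2 ≤ M)
    (hax : ∀ u ∈ Icc (-2 : ℝ) 0, pdu r u u = -(1 / 2))
    (hflux : ∀ p ∈ Qset, (∫ v' in p.1..p.2, (g (φ p.1 v')) ^ 2 / r p.1 v') ≤ ε)
    (hp : (a, b) ∈ Qset) :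
    |pdu r a b + 1 / 2| ≤ κ * M ^ 2 / 4 * ε := by
  have hr' : ContDiffOn ℝ 1 (uncurry (pdu r)) V := contDiffOn_pdu hV hr
  have key := abs_sub_le_of_hasDerivAt_eq_mul (h := fun t => pdu r a t)
    (K := κ * M ^ 2 / 4) (c := fun t => κ * Ω a t ^ 2 / 4) (G := fun t => g (φ a t) ^ 2 / r a t)
    (show a ≤ b from hp.2.1)
    (fun t ht => hasDerivAt_pdub <|
      (hr'.differentiableOn one_ne_zero).differentiableAt (hV.mem_nhds (hQV (Qset.snd_mem hp ht))))
    (Qset.continuousOn_slice_snd hQV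
      (contDiffOn_pdub (n := 0) hV (by simpa using hr')).continuousOn hp)
    ((continuousOn_const.mul ((Qset.continuousOn_slice_snd hQV hΩ hp).pow 2)).div_const 4)
    (fun t ht => by have := hΩpos _ (Qset.snd_mem hp ht); positivity)
    (fun t ht => by
      have hq := Qset.snd_mem hp ht
      gcongr
      exacts [(hΩpos _ hq).le, hΩM _ hq])
    (fun t ht => by have := hrpos _ (Qset.snd_mem hp (Ioo_subset_Icc_self ht)) ht.1; positivity)
    (fun t ht => by
      have hq := Qset.snd_mem hp (Ioo_subset_Icc_self ht)
      rw [← pdu_pdub_comm ((hr.contDiffAt (hV.mem_nhds (hQV hq)))), hN3 _ hq ht.1]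
      ring)
    (hflux _ hp)
  rwa [hax a (Qset.fst_mem_axis hp), sub_neg_eq_add] at key

theorem abs_r_sub_vrho_le {δ : ℝ} (hV : IsOpen V) (hQV : Qset ⊆ V)
    (hr : ContDiffOn ℝ 1 (uncurry r) V) (hax : ∀ u ∈ Icc (-2 : ℝ) 0, r u u = 0)
    (hδ : ∀ p ∈ Qset, |pdub r p.1 p.2 - 1 / 2| ≤ δ) (hp : (a, b) ∈ Qset) :
    |r a b - vrho (a, b)| ≤ 2 * δ * vrho (a, b) := by
  have hab : a ≤ b := hp.2.1
  have hFTC : ∫ t in a..b, (pdub r a t - 1 / 2) = (r a b - b / 2) - (r a a - a / 2) := by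
    refine intervalIntegral.integral_eq_sub_of_hasDerivAt (f := fun t => r a t - t / 2)
      (fun t ht => ?_) ?_
    · rw [uIcc_of_le hab] at ht
      have hd := (hr.differentiableOn one_ne_zero).differentiableAt
        (hV.mem_nhds (hQV (Qset.snd_mem hp ht)))
      exact (hasDerivAt_pdub hd).sub ((hasDerivAt_id' t).div_const 2)
    · exact ((Qset.continuousOn_slice_snd hQV
        (contDiffOn_pdub (n := 0) hV (by simpa using hr)).continuousOn hp).sub
        continuousOn_const).intervalIntegrable_of_Icc hab
  have hbound := intervalIntegral.norm_integral_le_of_norm_le_const (C := δ)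
    (f := fun t => pdub r a t - 1 / 2) (a := a) (b := b) fun t ht =>
      hδ _ (Qset.snd_mem hp (Ioc_subset_Icc_self (by rwa [uIoc_of_le hab] at ht)))
  rw [hFTC, hax a (Qset.fst_mem_axis hp), Real.norm_eq_abs, abs_of_nonneg (sub_nonneg.2 hab)]
    at hbound
  calc |r a b - vrho (a, b)| = |r a b - b / 2 - (0 - a / 2)| := by simp only [vrho]; ring_nf
    _ ≤ δ * (b - a) := hbound
    _ = 2 * δ * vrho (a, b) := by simp only [vrho]; ring

theorem abs_inv_sq_mul_pdu_add_half_le (hκ : 0 < κ) (hM : 0 < M) (hV : IsOpen V)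
    (hQV : Qset ⊆ V) (hΩ : ContDiffOn ℝ 1 (uncurry Ω) V) (hr : ContDiffOn ℝ 2 (uncurry r) V)
    (hrpos : ∀ p ∈ Qset, p.1 < p.2 → 0 < r p.1 p.2)
    (hN1 : ∀ p ∈ Qset, p.1 < p.2 → EqN1 κ Ω r φ p.1 p.2)
    (hΩM : ∀ p ∈ Qset, M⁻¹ ≤ Ω p.1 p.2) (haxΩ : ∀ u ∈ Icc (-2 : ℝ) 0, Ω u u = 1)
    (haxr : ∀ u ∈ Icc (-2 : ℝ) 0, pdu r u u = -(1 / 2))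
    (hflux : ∀ p ∈ Qset, (∫ u' in p.1..p.2, r u' p.2 * (pdu φ u' p.2) ^ 2) ≤ ε)
    (hp : (a, b) ∈ Qset) :
    |(Ω a b ^ 2)⁻¹ * pdu r a b + 1 / 2| ≤ κ * M ^ 2 * ε := by
  set V' := V ∩ uncurry Ω ⁻¹' Ioi 0
  have hV' : IsOpen V' := hΩ.continuousOn.isOpen_inter_preimage hV isOpen_Ioi
  have hΩpos : ∀ p ∈ Qset, 0 < Ω p.1 p.2 := fun p hp => (inv_pos.2 hM).trans_le (hΩM p hp)
  have hQV' : Qset ⊆ V' := fun p hp => ⟨hQV hp, hΩpos p hp⟩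
  have hW : ContDiffOn ℝ 1 (uncurry fun u v => (Ω u v ^ 2)⁻¹ * pdu r u v) V' :=
    (((hΩ.mono inter_subset_left).pow 2).inv fun p hp => pow_ne_zero 2 (ne_of_gt hp.2)).mul
      ((contDiffOn_pdu hV hr).mono inter_subset_left)
  have key := abs_sub_le_of_hasDerivAt_eq_mul
    (h := fun s => -((Ω s b ^ 2)⁻¹ * pdu r s b))
    (d := fun s => -pdu (fun u v => (Ω u v ^ 2)⁻¹ * pdu r u v) s b)
    (K := κ * M ^ 2) (c := fun s => κ * (Ω s b ^ 2)⁻¹) (G := fun s => r s b * pdu φ s b ^ 2)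
    (show a ≤ b from hp.2.1)
    (fun s hs => (hasDerivAt_pdu <|
      (hW.differentiableOn one_ne_zero).differentiableAt
        (hV'.mem_nhds (hQV' (Qset.fst_mem hp hs)))).neg)
    (Qset.continuousOn_slice_fst hQV'
      (contDiffOn_pdu (n := 0) hV' (by simpa using hW)).continuousOn hp).neg
    (continuousOn_const.mul (((Qset.continuousOn_slice_fst hQV hΩ.continuousOn hp).pow 2).inv₀
      fun s hs => pow_ne_zero 2 (hΩpos _ (Qset.fst_mem hp hs)).ne'))
    (fun s hs => by have := hΩpos _ (Qset.fst_mem hp hs); positivity)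
    (fun s hs => by
      have hq := Qset.fst_mem hp hs
      rw [← inv_pow]
      gcongr
      exacts [inv_nonneg.2 (hΩpos _ hq).le, inv_le_of_inv_le₀ hM (hΩM _ hq)])
    (fun s hs => by have := hrpos _ (Qset.fst_mem hp (Ioo_subset_Icc_self hs)) hs.2; positivity)
    (fun s hs => by
      rw [hN1 _ (Qset.fst_mem hp (Ioo_subset_Icc_self hs)) hs.2]
      ring)
    (hflux _ hp)
  have hb := Qset.snd_mem_axis hp
  rwa [haxΩ b hb, haxr b hb, show -(((1 : ℝ) ^ 2)⁻¹ * -(1 / 2)) - -((Ω a b ^ 2)⁻¹ * pdu r a b)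
    = (Ω a b ^ 2)⁻¹ * pdu r a b + 1 / 2 by ring] at key

end SmallFlux

/-- Small flux implies the basic geometric bounds: there exist `ε₀, C > 0` depending only
on `κ` and `M` such that, for any solution of (N1), (N3) with the axis normalization,
`1/M ≤ Ω ≤ M`, and flux smallness `≤ ε ≤ ε₀`, one has on all of `Q`:
`|∂_ū r − 1/2| ≤ Cε`, `|∂_u r + 1/2| ≤ Cε`, `|r − ϱ| ≤ Cεϱ` and `|Ω − 1| ≤ Cε`. -/
theorem small_flux_geometry_bounds
    (κ M : ℝ) (hκ : 0 < κ) (hM : 1 ≤ M) :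
    ∃ ε₀ > (0:ℝ), ∃ C > (0:ℝ),
      ∀ (g : ℝ → ℝ) (Ω r φ : ℝ → ℝ → ℝ) (ε : ℝ),
        ContDiff ℝ 1 g →
        SmoothNearQ 2 Ω r φ →
        (∀ p ∈ Qset, p.1 < p.2 → 0 < r p.1 p.2) →
        (∀ p ∈ Qset, p.1 < p.2 → EqN1 κ Ω r φ p.1 p.2) →
        (∀ p ∈ Qset, p.1 < p.2 → EqN3 κ g Ω r φ p.1 p.2) →
        AxisNormalized Ω r φ →
        (∀ p ∈ Qset, M⁻¹ ≤ Ω p.1 p.2 ∧ Ω p.1 p.2 ≤ M) →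
        0 < ε →
        (∀ p ∈ Qset, (∫ u' in p.1..p.2, r u' p.2 * (pdu φ u' p.2) ^ 2) ≤ ε) →
        (∀ p ∈ Qset, (∫ u' in p.1..p.2, (g (φ u' p.2)) ^ 2 / r u' p.2) ≤ ε) →
        (∀ p ∈ Qset, (∫ v' in p.1..p.2, (g (φ p.1 v')) ^ 2 / r p.1 v') ≤ ε) →
        ε ≤ ε₀ →
        ∀ p ∈ Qset,
          |pdub r p.1 p.2 - 1 / 2| ≤ C * ε ∧
          |pdu r p.1 p.2 + 1 / 2| ≤ C * ε ∧
          |r p.1 p.2 - vrho p| ≤ C * ε * vrho p ∧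
          |Ω p.1 p.2 - 1| ≤ C * ε := by
  have hM₀ : 0 < M := one_pos.trans_le hM
  refine ⟨(4 * (κ * M ^ 2))⁻¹, by positivity, 8 * (κ * M ^ 2), by positivity, ?_⟩
  intro g Ω r φ ε _ hsmooth hrpos hN1 hN3 hax hΩM hε hflux₁ hflux₂ hflux₃ hεε₀ ⟨a, b⟩ hp
  obtain ⟨V, hV, hQV, hΩ, hr, -⟩ := hsmooth
  have hΩpos : ∀ p ∈ Qset, 0 < Ω p.1 p.2 := fun p hp => (inv_pos.2 hM₀).trans_le (hΩM p hp).1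
  have hsmall : κ * M ^ 2 * ε ≤ 1 / 4 :=
    calc κ * M ^ 2 * ε ≤ κ * M ^ 2 * (4 * (κ * M ^ 2))⁻¹ := by gcongr
      _ = 1 / 4 := by field_simp
  have hpdub : ∀ p ∈ Qset, |pdub r p.1 p.2 - 1 / 2| ≤ κ * M ^ 2 / 4 * ε := fun p hp =>
    abs_pdub_sub_half_le hκ hV hQV hΩ.continuousOn hr hrpos hN3 hΩpos (fun p hp => (hΩM p hp).2)
      (fun u hu => (hax u hu).2.1) hflux₂ hp
  have hpdu := abs_pdu_add_half_le hκ hV hQV hΩ.continuousOn hr hrpos hN3 hΩpos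
    (fun p hp => (hΩM p hp).2) (fun u hu => (hax u hu).2.2.1) hflux₃ hp
  have hr_vrho := abs_r_sub_vrho_le hV hQV (hr.of_le (by norm_num)) (fun u hu => (hax u hu).1)
    hpdub hp
  have hΩ_pdu := abs_inv_sq_mul_pdu_add_half_le hκ hM₀ hV hQV (hΩ.of_le (by norm_num)) hr hrpos
    hN1 (fun p hp => (hΩM p hp).1) (fun u hu => (hax u hu).2.2.2.1) (fun u hu => (hax u hu).2.2.1)
    hflux₁ hp
  have hKε : 0 ≤ κ * M ^ 2 * ε := by positivity
  have hvrho : 0 ≤ vrho (a, b) := div_nonneg (sub_nonneg.2 hp.2.1) zero_le_two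
  refine ⟨(hpdub _ hp).trans (by linarith), hpdu.trans (by linarith),
    hr_vrho.trans (by nlinarith), ?_⟩
  exact (abs_sub_one_le_of_abs_add_half_le (hΩpos _ hp) (hpdu.trans (by linarith)) hΩ_pdu
    hsmall).trans (by linarith)
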